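/- A greedy basis is democratic: if {x_i} is a normalized Schauder basis of a Banach space X which is greedy with constant C (as in the Konyagin–Temlyakov definition), then there is a constant D such that for all finite sets A, B ⊂ ℕ with |A| = |B|, ‖Σ_{i∈A} x_i‖ ≤ D ‖Σ_{i∈B} x_i‖. -/

import Mathlib

/-!
Apply the greedy inequality to the 0/1 vector supported on `A ∪ E` for disjoint `A`, `E` of equal
size: `E` is a greedy set, so removing it (leaving `Σ_A xᵢ`) is within a factor `C` of removing
`A` (leaving `Σ_E xᵢ`). For arbitrary `A`, `B` of equal size, compare both with a third set `E`
of the same size disjoint from `A ∪ B`, which gives `D = C²`.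
-/

def IsGreedyWith {ι X : Type*} [NormedAddCommGroup X] [NormedSpace ℝ X]
    (x : ι → X) (C : ℝ) : Prop :=
  ∀ (a : ι →₀ ℝ) (A : Finset ι),
    (∀ i ∈ A, ∀ j ∉ A, |a j| ≤ |a i|) →
    ∀ B : Finset ι, B.card = A.card → ∀ b : ι → ℝ,
      ‖(a.sum fun i c => c • x i) - ∑ i ∈ A, a i • x i‖
        ≤ C * ‖(a.sum fun i c => c • x i) - ∑ i ∈ B, b i • x i‖

theorem Finset.exists_disjoint_card_eq {ι : Type*} [Infinite ι] (S : Finset ι) (n : ℕ) :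
    ∃ E : Finset ι, Disjoint S E ∧ E.card = n := by
  obtain ⟨E, hE, hcard⟩ := S.finite_toSet.infinite_compl.exists_subset_card_eq n
  exact ⟨E, Finset.disjoint_left.2 fun i hiS hiE => hE hiE hiS, hcard⟩

section Greedy

variable {ι X : Type*} [NormedAddCommGroup X] [NormedSpace ℝ X] {x : ι → X} {C : ℝ}

theorem Finsupp.sum_indicator_one_smul (S : Finset ι) (x : ι → X) :
    ((Finsupp.indicator S fun _ _ => (1 : ℝ)).sum fun i c => c • x i) = ∑ i ∈ S, x i := by
  rw [Finsupp.sum_indicator_index _ (by simp)]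
  simp

theorem IsGreedyWith.norm_sum_le_of_disjoint (hx : IsGreedyWith x C) {A E : Finset ι}
    (hdisj : Disjoint A E) (hcard : A.card = E.card) :
    ‖∑ i ∈ A, x i‖ ≤ C * ‖∑ i ∈ E, x i‖ := by
  classical
  set a : ι →₀ ℝ := Finsupp.indicator (A ∪ E) fun _ _ => 1
  have ha_mem : ∀ i ∈ A ∪ E, a i = 1 := fun i hi => Finsupp.indicator_of_mem hi _
  have ha_abs_le : ∀ j, |a j| ≤ 1 := by
    intro j
    by_cases hj : j ∈ A ∪ E
    · simp [ha_mem j hj]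
    · simp [a, Finsupp.indicator_of_notMem hj]
  have hE_greedy : ∀ i ∈ E, ∀ j ∉ E, |a j| ≤ |a i| := fun i hi j _ => by
    rw [ha_mem i (Finset.mem_union_right _ hi), abs_one]
    exact ha_abs_le j
  have hE_coeff : ∑ i ∈ E, a i • x i = ∑ i ∈ E, x i :=
    Finset.sum_congr rfl fun i hi => by rw [ha_mem i (Finset.mem_union_right _ hi), one_smul]
  have h := hx a E hE_greedy A hcard 1
  rw [Finsupp.sum_indicator_one_smul, Finset.sum_union hdisj, hE_coeff] at h
  simpa using h

theorem IsGreedyWith.norm_sum_le_sq_mul [Infinite ι] (hx : IsGreedyWith x C) {A B : Finset ι}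
    (hcard : A.card = B.card) :
    ‖∑ i ∈ A, x i‖ ≤ C ^ 2 * ‖∑ i ∈ B, x i‖ := by
  classical
  obtain ⟨E, hdisj, hEcard⟩ := (A ∪ B).exists_disjoint_card_eq A.card
  have hAE := hx.norm_sum_le_of_disjoint (Finset.disjoint_union_left.1 hdisj).1 hEcard.symm
  have hEB := hx.norm_sum_le_of_disjoint (Finset.disjoint_union_left.1 hdisj).2.symm
    (hEcard.trans hcard)
  rcases le_or_gt 0 C with hC | hC
  · calc ‖∑ i ∈ A, x i‖ ≤ C * (C * ‖∑ i ∈ B, x i‖) := hAE.trans (by gcongr)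
      _ = C ^ 2 * ‖∑ i ∈ B, x i‖ := by ring
  · calc ‖∑ i ∈ A, x i‖ ≤ C * ‖∑ i ∈ E, x i‖ := hAE
      _ ≤ 0 := mul_nonpos_of_nonpos_of_nonneg hC.le (norm_nonneg _)
      _ ≤ C ^ 2 * ‖∑ i ∈ B, x i‖ := by positivity

end Greedy

theorem stmt_9_general {X : Type*} [NormedAddCommGroup X] [NormedSpace ℝ X]
    (x : ℕ → X)
    (C : ℝ)
    (hgreedy : ∀ (a : ℕ →₀ ℝ) (A : Finset ℕ),
      (∀ i ∈ A, ∀ j ∉ A, |a j| ≤ |a i|) →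
      ∀ B : Finset ℕ, B.card = A.card → ∀ b : ℕ → ℝ,
        ‖(a.sum fun i c => c • x i) - ∑ i ∈ A, a i • x i‖
          ≤ C * ‖(a.sum fun i c => c • x i) - ∑ i ∈ B, b i • x i‖) :
    ∃ D : ℝ, ∀ A B : Finset ℕ, A.card = B.card →
      ‖∑ i ∈ A, x i‖ ≤ D * ‖∑ i ∈ B, x i‖ :=
  ⟨C ^ 2, fun _ _ hcard => IsGreedyWith.norm_sum_le_sq_mul hgreedy hcard⟩

/-- A greedy basis is democratic: if `{x_i}` is a normalized basis of a Banach space `X`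
(vectors `Σ aᵢ xᵢ` encoded by finitely supported coefficient sequences) which is greedy
with constant `C` in the Konyagin–Temlyakov sense, then there is `D` such that
`‖Σ_{i∈A} xᵢ‖ ≤ D ‖Σ_{i∈B} xᵢ‖` for all finite `A, B ⊆ ℕ` with `|A| = |B|`. -/
theorem stmt_9 {X : Type*} [NormedAddCommGroup X] [NormedSpace ℝ X] [CompleteSpace X]
    (x : ℕ → X) (hnorm : ∀ i, ‖x i‖ = 1)
    (hspan : Dense (Submodule.span ℝ (Set.range x) : Set X))
    (C : ℝ)
    (hgreedy : ∀ (a : ℕ →₀ ℝ) (A : Finset ℕ),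
      (∀ i ∈ A, ∀ j ∉ A, |a j| ≤ |a i|) →
      ∀ B : Finset ℕ, B.card = A.card → ∀ b : ℕ → ℝ,
        ‖(a.sum fun i c => c • x i) - ∑ i ∈ A, a i • x i‖
          ≤ C * ‖(a.sum fun i c => c • x i) - ∑ i ∈ B, b i • x i‖) :
    ∃ D : ℝ, ∀ A B : Finset ℕ, A.card = B.card →
      ‖∑ i ∈ A, x i‖ ≤ D * ‖∑ i ∈ B, x i‖ :=
  stmt_9_general x C hgreedy
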